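/- arXiv:2002.03827 — 6 statements merged into one kernel-verified Lean document; each statement's English description precedes it below -/
import Mathlib

section
/- (Robust Region.) Let Q* be the fixed point of the Bellman Q-operator F with cost g and let Q̃* be the fixed point of the Bellman Q-operator F̃ with falsified cost g̃ (same transition kernel p and discount factor α ∈ (0,1)). Let μ† be any policy and define D_{Q*}(μ†) := inf { ‖Q − Q*‖_∞ : Q ∈ V_{μ†} }. If Q̃* ∈ V_{μ†}, then ‖g̃ − g‖_∞ ≥ (1−α) · D_{Q*}(μ†); equivalently, if ‖g̃ − g‖_∞ < (1−α) · D_{Q*}(μ†), then Q̃* ∉ V_{μ†}. -/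
/-- Robust Region: let `Q*` be the fixed point of the Bellman Q-operator with
cost `g` and `Q̃*` the fixed point with falsified cost `g̃` (same kernel, same `α ∈ (0,1)`).
For any policy `μ†`, with `D_{Q*}(μ†) = inf { ‖Q − Q*‖_∞ : Q ∈ V_{μ†} }`, if
`Q̃* ∈ V_{μ†}` then `‖g̃ − g‖_∞ ≥ (1−α) · D_{Q*}(μ†)`. -/
theorem robust_region
    {S A : Type*} [Fintype S] [Fintype A] [Nonempty S] [Nonempty A]
    (p : S → A → S → ℝ) (hp0 : ∀ i u j, 0 ≤ p i u j) (hp1 : ∀ i u, ∑ j, p i u j = 1)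
    (g gt : S → A → ℝ) (α : ℝ) (hα0 : 0 < α) (hα1 : α < 1)
    (Qstar Qtstar : S → A → ℝ)
    (hQstar : ∀ i u, Qstar i u = g i u + α * ∑ j, p i u j * ⨅ v, Qstar j v)
    (hQtstar : ∀ i u, Qtstar i u = gt i u + α * ∑ j, p i u j * ⨅ v, Qtstar j v)
    (μdag : S → A)
    (hmem : Qtstar ∈ {Q : S → A → ℝ | ∀ i : S, ∀ u : A, u ≠ μdag i → Q i (μdag i) < Q i u}) :
    (1 - α) * sInf {d : ℝ |
      ∃ Q ∈ {Q : S → A → ℝ | ∀ i : S, ∀ u : A, u ≠ μdag i → Q i (μdag i) < Q i u},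
      d = ‖Q - Qstar‖} ≤ ‖gt - g‖ := by
  set c : ℝ := ‖Qtstar - Qstar‖ with hc
  have hcpt : ∀ i u, |Qtstar i u - Qstar i u| ≤ c := by
    intro i u
    have h1 : ‖(Qtstar - Qstar) i‖ ≤ c := norm_le_pi_norm (Qtstar - Qstar) i
    have h2 : ‖(Qtstar - Qstar) i u‖ ≤ ‖(Qtstar - Qstar) i‖ :=
      norm_le_pi_norm ((Qtstar - Qstar) i) u
    simpa using h2.trans h1
  have hgpt : ∀ i u, |gt i u - g i u| ≤ ‖gt - g‖ := by
    intro i u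
    have h1 : ‖(gt - g) i‖ ≤ ‖gt - g‖ := norm_le_pi_norm (gt - g) i
    have h2 : ‖(gt - g) i u‖ ≤ ‖(gt - g) i‖ := norm_le_pi_norm ((gt - g) i) u
    simpa using h2.trans h1
  -- bound on difference of infima
  have hinf : ∀ j : S, |(⨅ v, Qtstar j v) - (⨅ v, Qstar j v)| ≤ c := by
    intro j
    rw [abs_sub_le_iff]
    constructor
    · obtain ⟨v₀, hv₀⟩ := exists_eq_ciInf_of_finite (f := fun v => Qstar j v)
      have h1 : (⨅ v, Qtstar j v) ≤ Qtstar j v₀ := ciInf_le (Finite.bddBelow_range _) v₀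
      have h2 : Qtstar j v₀ - Qstar j v₀ ≤ c := (abs_le.mp (hcpt j v₀)).2
      rw [← hv₀]; linarith
    · obtain ⟨v₀, hv₀⟩ := exists_eq_ciInf_of_finite (f := fun v => Qtstar j v)
      have h1 : (⨅ v, Qstar j v) ≤ Qstar j v₀ := ciInf_le (Finite.bddBelow_range _) v₀
      have h2 : Qstar j v₀ - Qtstar j v₀ ≤ c := by
        have := (abs_le.mp (hcpt j v₀)).1; linarith
      rw [← hv₀]; linarith
  -- key contraction bound
  have hkey : c ≤ ‖gt - g‖ + α * c := by
    have hM : (0:ℝ) ≤ ‖gt - g‖ + α * c := by positivity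
    rw [hc, pi_norm_le_iff_of_nonneg hM]
    intro i
    rw [pi_norm_le_iff_of_nonneg hM]
    intro u
    have heq : Qtstar i u - Qstar i u =
        (gt i u - g i u) + α * ∑ j, p i u j * ((⨅ v, Qtstar j v) - (⨅ v, Qstar j v)) := by
      rw [hQtstar i u, hQstar i u]
      have hs : ∑ j, p i u j * ((⨅ v, Qtstar j v) - (⨅ v, Qstar j v)) =
          (∑ j, p i u j * ⨅ v, Qtstar j v) - ∑ j, p i u j * ⨅ v, Qstar j v := by
        rw [← Finset.sum_sub_distrib]
        exact Finset.sum_congr rfl fun j _ => by ring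
      rw [hs]; ring
    have hsum : |∑ j, p i u j * ((⨅ v, Qtstar j v) - (⨅ v, Qstar j v))| ≤ c := by
      calc |∑ j, p i u j * ((⨅ v, Qtstar j v) - (⨅ v, Qstar j v))|
          ≤ ∑ j, |p i u j * ((⨅ v, Qtstar j v) - (⨅ v, Qstar j v))| :=
            Finset.abs_sum_le_sum_abs _ _
        _ ≤ ∑ j, p i u j * c := by
            apply Finset.sum_le_sum
            intro j _
            rw [abs_mul, abs_of_nonneg (hp0 i u j)]
            exact mul_le_mul_of_nonneg_left (hinf j) (hp0 i u j)
        _ = c := by rw [← Finset.sum_mul, hp1 i u, one_mul]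
    have : ‖(Qtstar - Qstar) i u‖ = |Qtstar i u - Qstar i u| := by simp
    rw [this, heq]
    calc |(gt i u - g i u) + α * ∑ j, p i u j * ((⨅ v, Qtstar j v) - (⨅ v, Qstar j v))|
        ≤ |gt i u - g i u| + |α * ∑ j, p i u j * ((⨅ v, Qtstar j v) - (⨅ v, Qstar j v))| :=
          abs_add_le _ _
      _ ≤ ‖gt - g‖ + α * c := by
          apply add_le_add (hgpt i u)
          rw [abs_mul, abs_of_pos hα0]
          exact mul_le_mul_of_nonneg_left hsum hα0.le
  have hcontr : (1 - α) * c ≤ ‖gt - g‖ := by nlinarith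
  -- sInf ≤ c
  have hsinf : sInf {d : ℝ |
      ∃ Q ∈ {Q : S → A → ℝ | ∀ i : S, ∀ u : A, u ≠ μdag i → Q i (μdag i) < Q i u},
      d = ‖Q - Qstar‖} ≤ c := by
    apply csInf_le
    · refine ⟨0, ?_⟩
      rintro d ⟨Q, _, rfl⟩
      exact norm_nonneg _
    · exact ⟨Qtstar, hmem, rfl⟩
  calc (1 - α) * sInf _ ≤ (1 - α) * c :=
        mul_le_mul_of_nonneg_left hsinf (by linarith)
    _ ≤ ‖gt - g‖ := hcontr
end

section
/- Let Q̃* be the fixed point of the Bellman Q-operator F̃ with cost g̃ and let μ† be a policy. Then Q̃* ∈ V_{μ†} if and only if for every i ∈ S and every u ∈ A with u ≠ μ†(i), g̃(i,u) > (𝟙_i − α·P_{iu})ᵀ (I − α·P_{μ†})^{-1} g̃_{μ†}, where 𝟙_i ∈ ℝ^S is the standard basis vector with a 1 in coordinate i, P_{iu} ∈ ℝ^S is the vector with components p(i,u,j), P_{μ†} is the S × S matrix with entries [P_{μ†}]_{ij} = p(i,μ†(i),j), and g̃_{μ†} ∈ ℝ^S has components g̃(i,μ†(i)). -/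
open Matrix Finset

-- infimum over a finite nonempty type achieved at a minimizer
lemma myCiInf_eq {A : Type*} [Fintype A] [Nonempty A] (f : A → ℝ) (a : A)
    (h : ∀ b, f a ≤ f b) : (⨅ v, f v) = f a :=
  le_antisymm (ciInf_le (Finite.bddBelow_range f) a) (le_ciInf h)

lemma bellman_fixed_unique {S A : Type*} [Fintype S] [Fintype A] [Nonempty S] [Nonempty A]
    (p : S → A → S → ℝ) (hp0 : ∀ i u j, 0 ≤ p i u j) (hp1 : ∀ i u, ∑ j, p i u j = 1)
    (gt : S → A → ℝ) (α : ℝ) (hα0 : 0 ≤ α) (hα1 : α < 1)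
    (Q Q' : S → A → ℝ)
    (hQ : ∀ i u, Q i u = gt i u + α * ∑ j, p i u j * ⨅ v, Q j v)
    (hQ' : ∀ i u, Q' i u = gt i u + α * ∑ j, p i u j * ⨅ v, Q' j v) :
    Q = Q' := by
  set D : ℝ := Finset.univ.sup' (by simp [Finset.univ_nonempty]) (fun x : S × A => |Q x.1 x.2 - Q' x.1 x.2|) with hD
  have hDle : ∀ i u, |Q i u - Q' i u| ≤ D := fun i u =>
    Finset.le_sup' (fun x : S × A => |Q x.1 x.2 - Q' x.1 x.2|) (Finset.mem_univ (i, u))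
  have hM : ∀ j : S, |(⨅ v, Q j v) - (⨅ v, Q' j v)| ≤ D := by
    intro j
    obtain ⟨a, ha⟩ := Finite.exists_min (Q j)
    obtain ⟨a', ha'⟩ := Finite.exists_min (Q' j)
    rw [myCiInf_eq (Q j) a ha, myCiInf_eq (Q' j) a' ha', abs_sub_le_iff]
    constructor
    · calc Q j a - Q' j a' ≤ Q j a' - Q' j a' := by linarith [ha a']
        _ ≤ |Q j a' - Q' j a'| := le_abs_self _
        _ ≤ D := hDle j a'
    · calc Q' j a' - Q j a ≤ Q' j a - Q j a := by linarith [ha' a]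
        _ ≤ |Q' j a - Q j a| := le_abs_self _
        _ = |Q j a - Q' j a| := abs_sub_comm _ _
        _ ≤ D := hDle j a
  have hDα : D ≤ α * D := by
    obtain ⟨x, -, hx⟩ := Finset.exists_mem_eq_sup' (by simp [Finset.univ_nonempty] :
      (Finset.univ : Finset (S × A)).Nonempty) (fun x : S × A => |Q x.1 x.2 - Q' x.1 x.2|)
    have hxle : D ≤ |Q x.1 x.2 - Q' x.1 x.2| := le_of_eq (hD.trans hx)
    refine hxle.trans ?_
    have hdiff : Q x.1 x.2 - Q' x.1 x.2
        = α * ∑ j, p x.1 x.2 j * ((⨅ v, Q j v) - (⨅ v, Q' j v)) := by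
      rw [hQ x.1 x.2, hQ' x.1 x.2]
      rw [Finset.sum_congr rfl (fun j _ => mul_sub (p x.1 x.2 j) _ _), Finset.sum_sub_distrib]
      ring
    rw [hdiff, abs_mul, abs_of_nonneg hα0]
    refine mul_le_mul_of_nonneg_left ?_ hα0
    calc |∑ j, p x.1 x.2 j * ((⨅ v, Q j v) - (⨅ v, Q' j v))|
        ≤ ∑ j, |p x.1 x.2 j * ((⨅ v, Q j v) - (⨅ v, Q' j v))| := Finset.abs_sum_le_sum_abs _ _
      _ ≤ ∑ j, p x.1 x.2 j * D := by
          refine Finset.sum_le_sum fun j _ => ?_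
          rw [abs_mul, abs_of_nonneg (hp0 _ _ _)]
          exact mul_le_mul_of_nonneg_left (hM j) (hp0 _ _ _)
      _ = D := by rw [← Finset.sum_mul, hp1, one_mul]
  have hD0 : D ≤ 0 := by nlinarith
  funext i u
  have h1 := hDle i u
  have h2 := abs_nonneg (Q i u - Q' i u)
  have : |Q i u - Q' i u| = 0 := le_antisymm (h1.trans hD0) h2
  have := abs_eq_zero.mp this
  linarith

theorem greedy_policy_iff_cost_conditions
    {S A : Type*} [Fintype S] [Fintype A] [DecidableEq S] [Nonempty S] [Nonempty A]
    (p : S → A → S → ℝ) (hp0 : ∀ i u j, 0 ≤ p i u j) (hp1 : ∀ i u, ∑ j, p i u j = 1)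
    (gt : S → A → ℝ) (α : ℝ) (hα0 : 0 < α) (hα1 : α < 1)
    (μdag : S → A)
    (Pμ : Matrix S S ℝ) (hPμ : ∀ i j, Pμ i j = p i (μdag i) j)
    (gμ : S → ℝ) (hgμ : ∀ i, gμ i = gt i (μdag i))
    (Qtstar : S → A → ℝ)
    (hQtstar : ∀ i u, Qtstar i u = gt i u + α * ∑ j, p i u j * ⨅ v, Qtstar j v) :
    Qtstar ∈ {Q : S → A → ℝ | ∀ i : S, ∀ u : A, u ≠ μdag i → Q i (μdag i) < Q i u} ↔
      ∀ i : S, ∀ u : A, u ≠ μdag i →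
        gt i u > ∑ j, ((if j = i then (1 : ℝ) else 0) - α * p i u j) *
          (((1 - α • Pμ)⁻¹).mulVec gμ) j := by
  -- invertibility of 1 - α • Pμ
  have hple1 : ∀ i u j, p i u j ≤ 1 := by
    intro i u j
    rw [← hp1 i u]
    exact Finset.single_le_sum (fun k _ => hp0 i u k) (Finset.mem_univ j)
  have hdet : (1 - α • Pμ).det ≠ 0 := by
    apply det_ne_zero_of_sum_row_lt_diag
    intro k
    have hd : (1 - α • Pμ) k k = 1 - α * p k (μdag k) k := by
      simp [Matrix.sub_apply, Matrix.one_apply, hPμ]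
    have hod : ∀ j ∈ Finset.univ.erase k, ‖(1 - α • Pμ) k j‖ = α * p k (μdag k) j := by
      intro j hj
      have hjk : j ≠ k := Finset.ne_of_mem_erase hj
      rw [Matrix.sub_apply, Matrix.one_apply_ne' hjk]
      simp only [Matrix.smul_apply, smul_eq_mul, zero_sub, norm_neg, hPμ]
      rw [Real.norm_eq_abs, abs_of_nonneg (mul_nonneg hα0.le (hp0 _ _ _))]
    rw [Finset.sum_congr rfl hod, ← Finset.mul_sum, hd]
    have hsum : ∑ j ∈ Finset.univ.erase k, p k (μdag k) j = 1 - p k (μdag k) k := by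
      have := hp1 k (μdag k)
      rw [← Finset.sum_erase_add Finset.univ _ (Finset.mem_univ k)] at this
      linarith
    rw [hsum, Real.norm_eq_abs, abs_of_nonneg (by nlinarith [hp0 k (μdag k) k, hple1 k (μdag k) k])]
    nlinarith [hp0 k (μdag k) k, hple1 k (μdag k) k]
  have hunit : IsUnit (1 - α • Pμ).det := isUnit_iff_ne_zero.mpr hdet
  set W : S → ℝ := ((1 - α • Pμ)⁻¹).mulVec gμ with hW
  -- key equation: W i = gμ i + α * ∑ j, Pμ i j * W j
  have hWeq : ∀ i, W i = gt i (μdag i) + α * ∑ j, p i (μdag i) j * W j := by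
    intro i
    have h1 : (1 - α • Pμ).mulVec W = gμ := by
      rw [hW, Matrix.mulVec_mulVec, Matrix.mul_nonsing_inv _ hunit, Matrix.one_mulVec]
    have h2 := congrFun h1 i
    simp only [Matrix.mulVec, dotProduct, Matrix.sub_apply, Matrix.smul_apply,
      Matrix.one_apply, smul_eq_mul, sub_mul, ite_mul, one_mul, zero_mul,
      Finset.sum_sub_distrib, Finset.sum_ite_eq, Finset.mem_univ, if_true] at h2
    rw [hgμ i] at h2
    rw [← h2, Finset.mul_sum]
    have : ∀ j, α * Pμ i j * W j = α * (p i (μdag i) j * W j) := by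
      intro j; rw [hPμ]; ring
    rw [Finset.sum_congr rfl (fun j _ => this j)]
    ring
  -- rewrite the RHS sum
  have hRHS : ∀ i u, (∑ j, ((if j = i then (1 : ℝ) else 0) - α * p i u j) * W j)
      = W i - α * ∑ j, p i u j * W j := by
    intro i u
    simp only [sub_mul, ite_mul, one_mul, zero_mul, Finset.sum_sub_distrib,
      Finset.sum_ite_eq', Finset.mem_univ, if_true, Finset.mul_sum]
    congr 1
    exact Finset.sum_congr rfl fun j _ => by ring
  constructor
  · -- forward
    intro hV i u hu
    -- M j := inf = Qtstar j (μdag j)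
    have hMeq : ∀ j, (⨅ v, Qtstar j v) = Qtstar j (μdag j) := by
      intro j
      refine myCiInf_eq _ _ fun b => ?_
      by_cases hb : b = μdag j
      · rw [hb]
      · exact le_of_lt (hV j b hb)
    -- M satisfies the linear equation, hence equals W
    have hMW : (fun j => Qtstar j (μdag j)) = W := by
      have hlin : (1 - α • Pμ).mulVec (fun j => Qtstar j (μdag j)) = gμ := by
        funext i'
        simp only [Matrix.mulVec, dotProduct, Matrix.sub_apply, Matrix.smul_apply,
          Matrix.one_apply, smul_eq_mul, sub_mul, ite_mul, one_mul, zero_mul,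
          Finset.sum_sub_distrib, Finset.sum_ite_eq, Finset.mem_univ, if_true]
        have := hQtstar i' (μdag i')
        rw [Finset.sum_congr rfl (fun j _ => by rw [hMeq j])] at this
        rw [hgμ i']
        rw [Finset.sum_congr rfl (fun j _ => show α * Pμ i' j * Qtstar j (μdag j)
          = α * (p i' (μdag i') j * Qtstar j (μdag j)) by rw [hPμ]; ring), ← Finset.mul_sum]
        linarith
      have := congrArg (fun v => ((1 - α • Pμ)⁻¹).mulVec v) hlin
      simpa [Matrix.mulVec_mulVec, Matrix.nonsing_inv_mul _ hunit, Matrix.one_mulVec, hW]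
        using this
    rw [gt_iff_lt, hRHS]
    have hMW' : ∀ j, (⨅ v, Qtstar j v) = W j := fun j => (hMeq j).trans (congrFun hMW j)
    have hQiu : Qtstar i u = gt i u + α * ∑ j, p i u j * W j := by
      rw [hQtstar i u, Finset.sum_congr rfl fun j _ => by rw [hMW' j]]
    have hQiμ : Qtstar i (μdag i) = W i := congrFun hMW i
    have := hV i u hu
    rw [hQiμ, hQiu] at this
    linarith
  · -- reverse
    intro hC i u hu
    -- define Qw and show it's a fixed point
    set Qw : S → A → ℝ := fun i u => gt i u + α * ∑ j, p i u j * W j with hQw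
    have hQwμ : ∀ i, Qw i (μdag i) = W i := fun i => (hWeq i).symm
    have hQwgt : ∀ i' u', u' ≠ μdag i' → W i' < Qw i' u' := by
      intro i' u' hu'
      have := hC i' u' hu'
      rw [gt_iff_lt, hRHS] at this
      simp only [hQw]
      linarith
    have hQwinf : ∀ j, (⨅ v, Qw j v) = W j := by
      intro j
      rw [show W j = Qw j (μdag j) from (hQwμ j).symm]
      refine myCiInf_eq _ _ fun b => ?_
      by_cases hb : b = μdag j
      · rw [hb]
      · rw [hQwμ j]; exact le_of_lt (hQwgt j b hb)
    have hQwfix : ∀ i' u', Qw i' u' = gt i' u' + α * ∑ j, p i' u' j * ⨅ v, Qw j v := by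
      intro i' u'
      rw [Finset.sum_congr rfl fun j _ => by rw [hQwinf j]]
    have heq : Qtstar = Qw :=
      bellman_fixed_unique p hp0 hp1 gt α (le_of_lt hα0) hα1 Qtstar Qw hQtstar hQwfix
    rw [heq]
    rw [hQwμ i]
    exact hQwgt i u hu
end

section
/- (Local affine structure of the cost-to-Q-factor map.) Let μ be a policy, let Q* be the fixed point of the Bellman Q-operator with cost g and let Q̃* be the fixed point of the Bellman Q-operator with cost g̃ = g + h (same transition kernel p and discount factor α ∈ (0,1)). If both Q* ∈ V_μ and Q̃* ∈ V_μ, then for every (i,u) ∈ S × A, Q̃*(i,u) − Q*(i,u) = α · P_{iu}ᵀ (I − α·P_μ)^{-1} h_μ + h(i,u), where P_{iu} ∈ ℝ^S has components p(i,u,j), P_μ is the matrix with entries [P_μ]_{ij} = p(i,μ(i),j), and h_μ ∈ ℝ^S has components h(i,μ(i)). -/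
open Matrix

/-! The greedy policy `μ` turns the Bellman equations for `Q*` and `Q̃*` into linear equations:
`Q(i,u) = g(i,u) + α P_{iu}ᵀ Q_μ`. Subtracting them, the difference `D = Q̃*_μ - Q*_μ` satisfies
`Q̃*(i,u) - Q*(i,u) = α P_{iu}ᵀ D + h(i,u)`, and evaluating at `u = μ(i)` gives
`(I - α P_μ) D = h_μ`. A row-stochastic matrix does not expand the sup norm, so for `|α| < 1`
the kernel of `I - α P_μ` is trivial and `D = (I - α P_μ)⁻¹ h_μ`. -/

lemma ciInf_eq_of_forall_le {ι α : Type*} [ConditionallyCompleteLattice α] {f : ι → α} {a : ι}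
    (h : ∀ u, f a ≤ f u) : ⨅ u, f u = f a :=
  IsLeast.csInf_eq ⟨⟨a, rfl⟩, Set.forall_mem_range.2 h⟩

namespace Matrix

variable {n : Type*} [Fintype n] [DecidableEq n] {M : Matrix n n ℝ}

lemma abs_mulVec_le_of_mem_rowStochastic (hM : M ∈ rowStochastic ℝ n) {v : n → ℝ} {c : ℝ}
    (hv : ∀ j, |v j| ≤ c) (i : n) : |(M *ᵥ v) i| ≤ c :=
  calc |(M *ᵥ v) i| = |∑ j, M i j * v j| := rfl
    _ ≤ ∑ j, M i j * |v j| := by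
        refine (Finset.abs_sum_le_sum_abs _ _).trans (le_of_eq ?_)
        simp only [abs_mul, abs_of_nonneg (nonneg_of_mem_rowStochastic hM)]
    _ ≤ ∑ j, M i j * c :=
        Finset.sum_le_sum fun j _ => mul_le_mul_of_nonneg_left (hv j) (nonneg_of_mem_rowStochastic hM)
    _ = c := by rw [← Finset.sum_mul, sum_row_of_mem_rowStochastic hM, one_mul]

lemma eq_zero_of_eq_smul_mulVec_of_mem_rowStochastic (hM : M ∈ rowStochastic ℝ n) {α : ℝ}
    (hα : |α| < 1) {v : n → ℝ} (hv : v = α • M *ᵥ v) : v = 0 := by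
  cases isEmpty_or_nonempty n
  · exact Subsingleton.elim _ _
  obtain ⟨k, hk⟩ := Finite.exists_max fun i => |v i|
  have hmax : |v k| ≤ |α| * |v k| :=
    calc |v k| = |α| * |(M *ᵥ v) k| := by
          conv_lhs => rw [hv]
          rw [Pi.smul_apply, smul_eq_mul, abs_mul]
      _ ≤ |α| * |v k| :=
          mul_le_mul_of_nonneg_left (abs_mulVec_le_of_mem_rowStochastic hM hk k) (abs_nonneg α)
  have hvk : |v k| = 0 := by nlinarith [abs_nonneg (v k)]
  funext j
  exact abs_nonpos_iff.1 (hvk ▸ hk j)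

lemma isUnit_det_one_sub_smul_of_mem_rowStochastic (hM : M ∈ rowStochastic ℝ n) {α : ℝ}
    (hα : |α| < 1) : IsUnit (1 - α • M).det := by
  rw [isUnit_iff_ne_zero]
  intro hdet
  obtain ⟨v, hv0, hv⟩ := exists_mulVec_eq_zero_iff.2 hdet
  refine hv0 (eq_zero_of_eq_smul_mulVec_of_mem_rowStochastic hM hα ?_)
  rwa [sub_mulVec, one_mulVec, smul_mulVec, sub_eq_zero] at hv

end Matrix

lemma bellman_eq_of_greedy {S A : Type*} [Fintype S] (p : S → A → S → ℝ) (g Q : S → A → ℝ)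
    (α : ℝ) (μ : S → A) (hQ : ∀ i u, Q i u = g i u + α * ∑ j, p i u j * ⨅ v, Q j v)
    (hμ : ∀ i u, Q i (μ i) ≤ Q i u) (i : S) (u : A) :
    Q i u = g i u + α * ∑ j, p i u j * Q j (μ j) := by
  simp only [ciInf_eq_of_forall_le (hμ _)] at hQ
  exact hQ i u

theorem local_affine_structure_general
    {S A : Type*} [Fintype S] [DecidableEq S]
    (p : S → A → S → ℝ) (hp0 : ∀ i u j, 0 ≤ p i u j) (hp1 : ∀ i u, ∑ j, p i u j = 1)
    (g h gt : S → A → ℝ) (hgt : ∀ i u, gt i u = g i u + h i u)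
    (α : ℝ) (hα0 : 0 < α) (hα1 : α < 1)
    (μ : S → A)
    (Pμ : Matrix S S ℝ) (hPμ : ∀ i j, Pμ i j = p i (μ i) j)
    (hμ : S → ℝ) (hhμ : ∀ i, hμ i = h i (μ i))
    (Qstar Qtstar : S → A → ℝ)
    (hQstar : ∀ i u, Qstar i u = g i u + α * ∑ j, p i u j * ⨅ v, Qstar j v)
    (hQtstar : ∀ i u, Qtstar i u = gt i u + α * ∑ j, p i u j * ⨅ v, Qtstar j v)
    (hmem : Qstar ∈ {Q : S → A → ℝ | ∀ i : S, ∀ u : A, u ≠ μ i → Q i (μ i) < Q i u})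
    (hmem' : Qtstar ∈ {Q : S → A → ℝ | ∀ i : S, ∀ u : A, u ≠ μ i → Q i (μ i) < Q i u}) :
    ∀ i u, Qtstar i u - Qstar i u =
      α * ∑ j, p i u j * (((1 - α • Pμ)⁻¹).mulVec hμ) j + h i u := by
  have greedy : ∀ Q ∈ {Q : S → A → ℝ | ∀ i : S, ∀ u : A, u ≠ μ i → Q i (μ i) < Q i u},
      ∀ i u, Q i (μ i) ≤ Q i u := fun Q hQ i u => by
    rcases eq_or_ne u (μ i) with rfl | hu
    exacts [le_rfl, (hQ i u hu).le]
  set D : S → ℝ := fun j => Qtstar j (μ j) - Qstar j (μ j)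
  have hdiff : ∀ i u, Qtstar i u - Qstar i u = α * ∑ j, p i u j * D j + h i u := fun i u => by
    rw [bellman_eq_of_greedy p gt Qtstar α μ hQtstar (greedy _ hmem') i u,
      bellman_eq_of_greedy p g Qstar α μ hQstar (greedy _ hmem) i u, hgt]
    simp only [D, mul_sub, Finset.sum_sub_distrib]
    ring
  have hsys : (1 - α • Pμ) *ᵥ D = hμ := by
    funext i
    have hPD : (Pμ *ᵥ D) i = ∑ j, p i (μ i) j * D j := by simp only [mulVec, dotProduct, hPμ]
    rw [sub_mulVec, one_mulVec, smul_mulVec, Pi.sub_apply, Pi.smul_apply, smul_eq_mul, hPD, hhμ]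
    linarith [hdiff i (μ i)]
  have hPμ_mem : Pμ ∈ rowStochastic ℝ S := mem_rowStochastic_iff_sum.2
    ⟨fun i j => hPμ i j ▸ hp0 _ _ _, fun i => by simp only [hPμ, hp1]⟩
  have hunit := isUnit_det_one_sub_smul_of_mem_rowStochastic hPμ_mem
    (abs_lt.2 ⟨by linarith, hα1⟩)
  intro i u
  rw [hdiff, ← hsys, mulVec_mulVec, nonsing_inv_mul _ hunit, one_mulVec]

/-- Local affine structure of the cost-to-Q-factor map: if `Q*` and `Q̃*`
are the fixed points of the Bellman Q-operators with costs `g` and `g̃ = g + h`, and both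
`Q*, Q̃* ∈ V_μ`, then `Q̃*(i,u) − Q*(i,u) = α P_{iu}ᵀ (I − α P_μ)⁻¹ h_μ + h(i,u)`. -/
theorem local_affine_structure
    {S A : Type*} [Fintype S] [Fintype A] [DecidableEq S] [Nonempty S] [Nonempty A]
    (p : S → A → S → ℝ) (hp0 : ∀ i u j, 0 ≤ p i u j) (hp1 : ∀ i u, ∑ j, p i u j = 1)
    (g h gt : S → A → ℝ) (hgt : ∀ i u, gt i u = g i u + h i u)
    (α : ℝ) (hα0 : 0 < α) (hα1 : α < 1)
    (μ : S → A)
    (Pμ : Matrix S S ℝ) (hPμ : ∀ i j, Pμ i j = p i (μ i) j)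
    (hμ : S → ℝ) (hhμ : ∀ i, hμ i = h i (μ i))
    (Qstar Qtstar : S → A → ℝ)
    (hQstar : ∀ i u, Qstar i u = g i u + α * ∑ j, p i u j * ⨅ v, Qstar j v)
    (hQtstar : ∀ i u, Qtstar i u = gt i u + α * ∑ j, p i u j * ⨅ v, Qtstar j v)
    (hmem : Qstar ∈ {Q : S → A → ℝ | ∀ i : S, ∀ u : A, u ≠ μ i → Q i (μ i) < Q i u})
    (hmem' : Qtstar ∈ {Q : S → A → ℝ | ∀ i : S, ∀ u : A, u ≠ μ i → Q i (μ i) < Q i u}) :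
    ∀ i u, Qtstar i u - Qstar i u =
      α * ∑ j, p i u j * (((1 - α • Pμ)⁻¹).mulVec hμ) j + h i u :=
  local_affine_structure_general p hp0 hp1 g h gt hgt α hα0 hα1 μ Pμ hPμ hμ hhμ Qstar Qtstar hQstar
    hQtstar hmem hmem'
end

section
/- (Attacks on a subset of states.) Let S̃ ⊆ S be the set of states on which the adversary can falsify costs and let μ† be the adversary's target policy. For each u ∈ A let K_u := (I − α·P_u)(I − α·P_{μ†})^{-1}, where P_u is the S × S matrix with entries [P_u]_{ij} = p(i,u,j) and P_{μ†} has entries [P_{μ†}]_{ij} = p(i,μ†(i),j). Suppose there exists x : S̃ → ℝ such that for every u ∈ A and every i ∈ S ∖ S̃ with u ≠ μ†(i), Σ_{j∈S̃} [K_u]_{ij} · x(j) < 0. Then for every true cost g : S × A → ℝ there exists a falsified cost g̃ : S × A → ℝ with g̃(i,u) = g(i,u) for all i ∈ S ∖ S̃ and all u ∈ A, such that for every i ∈ S and every u ∈ A with u ≠ μ†(i), g̃(i,u) > Σ_{j∈S} [K_u]_{ij} · g̃(j,μ†(j)). -/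
open Matrix

/-- Attacks on a subset of states: let `S̃ ⊆ S` be the states on which the
adversary can falsify costs, `μ†` the target policy, and for each `u ∈ A` let
`K_u = (I − α P_u)(I − α P_{μ†})⁻¹`. If there exists `x : S̃ → ℝ` with
`∑_{j∈S̃} [K_u]_{ij} x(j) < 0` for every `u` and every `i ∉ S̃` with `u ≠ μ†(i)`, then for
every true cost `g` there is a falsified cost `g̃` agreeing with `g` outside `S̃` such that
`g̃(i,u) > ∑_j [K_u]_{ij} g̃(j,μ†(j))` for all `i` and all `u ≠ μ†(i)`. -/
theorem attacks_on_subset_of_states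
    {S A : Type*} [Fintype S] [Fintype A] [DecidableEq S] [Nonempty S] [Nonempty A]
    (p : S → A → S → ℝ) (hp0 : ∀ i u j, 0 ≤ p i u j) (hp1 : ∀ i u, ∑ j, p i u j = 1)
    (α : ℝ) (hα0 : 0 < α) (hα1 : α < 1)
    (St : Set S) [DecidablePred (· ∈ St)]
    (μdag : S → A)
    (P : A → Matrix S S ℝ) (hP : ∀ u i j, (P u) i j = p i u j)
    (Pμ : Matrix S S ℝ) (hPμ : ∀ i j, Pμ i j = p i (μdag i) j)
    (K : A → Matrix S S ℝ) (hK : ∀ u, K u = (1 - α • P u) * (1 - α • Pμ)⁻¹)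
    (hx : ∃ x : St → ℝ, ∀ u : A, ∀ i : S, i ∉ St → u ≠ μdag i →
      ∑ j : St, (K u) i (j : S) * x j < 0) :
    ∀ g : S → A → ℝ, ∃ gt : S → A → ℝ,
      (∀ i : S, i ∉ St → ∀ u : A, gt i u = g i u) ∧
      (∀ i : S, ∀ u : A, u ≠ μdag i →
        gt i u > ∑ j, (K u) i j * gt j (μdag j)) := by
  classical
  obtain ⟨x, hxlt⟩ := hx
  intro g
  -- extend x by zero
  set xe : S → ℝ := fun j => if hj : j ∈ St then x ⟨j, hj⟩ else 0 with hxe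
  have hxe_coe : ∀ j : St, xe (j : S) = x j := fun j => dif_pos j.2
  set s : A → S → ℝ := fun u i => ∑ j : St, (K u) i (j : S) * xe (j : S) with hsdef
  have hs_eq : ∀ u i, s u i = ∑ j : St, (K u) i (j : S) * x j := by
    intro u i; simp only [hsdef]
    exact Finset.sum_congr rfl (fun j _ => by rw [hxe_coe])
  have hsneg : ∀ u i, i ∉ St → u ≠ μdag i → s u i < 0 := by
    intro u i hi hu; rw [hs_eq]; exact hxlt u i hi hu
  set R : A → S → ℝ :=
    fun u i => ∑ j ∈ Finset.univ.filter (fun j => j ∉ St), (K u) i j * g j (μdag j) with hRdef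
  -- choose c large
  set F : S × A → ℝ := fun q =>
    if q.1 ∉ St ∧ q.2 ≠ μdag q.1 then (R q.2 q.1 - g q.1 q.2) / (-(s q.2 q.1)) else 0 with hF
  have hne : (Finset.univ : Finset (S × A)).Nonempty := Finset.univ_nonempty
  set c : ℝ := Finset.univ.sup' hne F + 1 with hc
  have hkey : ∀ u i, i ∉ St → u ≠ μdag i → g i u > R u i + c * s u i := by
    intro u i hi hu
    have hneg := hsneg u i hi hu
    have hpos : 0 < -(s u i) := by linarith
    have hle : F (i, u) ≤ Finset.univ.sup' hne F :=
      Finset.le_sup' F (Finset.mem_univ (i, u))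
    have hFiu : F (i, u) = (R u i - g i u) / (-(s u i)) := by
      simp only [hF]; rw [if_pos ⟨hi, hu⟩]
    have hcgt : (R u i - g i u) / (-(s u i)) < c := by
      rw [← hFiu]; linarith
    rw [div_lt_iff₀ hpos] at hcgt
    nlinarith
  -- falsified costs
  set h : S → ℝ := fun j => if j ∈ St then c * xe j else g j (μdag j) with hh
  set gt : S → A → ℝ := fun i u =>
    if i ∈ St then (if u = μdag i then c * xe i else (∑ j, (K u) i j * h j) + 1)
    else g i u with hgt
  have hgh : ∀ j, gt j (μdag j) = h j := by
    intro j
    by_cases hj : j ∈ St <;> simp [hgt, hh, hj]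
  refine ⟨gt, ?_, ?_⟩
  · intro i hi u
    simp [hgt, hi]
  · intro i u hu
    have hsum : ∑ j, (K u) i j * gt j (μdag j) = ∑ j, (K u) i j * h j :=
      Finset.sum_congr rfl (fun j _ => by rw [hgh])
    rw [hsum]
    have hsplit : ∑ j, (K u) i j * h j = c * s u i + R u i := by
      rw [← Finset.sum_filter_add_sum_filter_not Finset.univ (fun j => j ∈ St)
        (fun j => (K u) i j * h j)]
      congr 1
      · have h1 : ∀ j ∈ Finset.univ.filter (fun j => j ∈ St),
            (K u) i j * h j = c * ((K u) i j * xe j) := by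
          intro j hj
          have : j ∈ St := (Finset.mem_filter.mp hj).2
          simp only [hh, if_pos this]; ring
        rw [Finset.sum_congr rfl h1, ← Finset.mul_sum, hsdef]
        congr 1
        have h2 : ∑ j ∈ Finset.univ.filter (fun j => j ∈ St), (K u) i j * xe j
            = ∑ j : St, (K u) i (j : S) * xe (j : S) :=
          Finset.sum_subtype _ (fun y => by simp) (fun j => (K u) i j * xe j)
        exact h2
      · refine Finset.sum_congr rfl (fun j hj => ?_)
        have : j ∉ St := (Finset.mem_filter.mp hj).2
        simp only [hh, if_neg this]
    rw [hsplit]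
    by_cases hi : i ∈ St
    · have : gt i u = (∑ j, (K u) i j * h j) + 1 := by
        simp [hgt, hi, hu]
      rw [this, hsplit]; linarith
    · have : gt i u = g i u := by simp [hgt, hi]
      rw [this]
      have := hkey u i hi hu
      linarith
end

section
/- Let P ∈ ℝ^{n×n} be a row-stochastic matrix with stationary distribution π, let α ∈ (0,1) and λ ∈ [0,1), and let M := (1−λ) · Σ_{m=0}^∞ λ^m α^{m+1} P^{m+1} (the series converges since αλ < 1 and α < 1). Then for every J ∈ ℝ^n, ‖M J‖_D ≤ (α(1−λ)/(1−αλ)) · ‖J‖_D. -/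
open Matrix

/-- The weighted quadratic norm `‖J‖_D = √(∑ i, π i · J i²)` associated with a weight
vector `π`. -/
noncomputable def normD {n : ℕ} (pi : Fin n → ℝ) (J : Fin n → ℝ) : ℝ :=
  Real.sqrt (∑ i, pi i * (J i) ^ 2)

/-!
Each power `P^k` is again row-stochastic with stationary distribution `π`, hence a contraction
for `‖·‖_D`: by Jensen `(P J)_i² ≤ (P J²)_i`, and stationarity gives `π ⬝ (P J²) = π ⬝ J²`.
Through `J ↦ D^{1/2} J` the seminorm `‖·‖_D` is a Euclidean norm, so the norm of the series
`M J = (1-λ) ∑ λ^m α^{m+1} P^{m+1} J` is at most `(1-λ) ∑ λ^m α^{m+1} ‖J‖_D`, a geometric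
series with sum `α(1-λ)/(1-αλ) ‖J‖_D`. The bound on a series needs no summability: an
unsummable series has `tsum = 0`.
-/

theorem norm_map_tsum_le_of_hasSum {ι R E F : Type*} [Semiring R] [AddCommMonoid E]
    [Module R E] [TopologicalSpace E] [SeminormedAddCommGroup F] [Module R F] [T2Space F]
    (L : E →L[R] F) {f : ι → E} {g : ι → ℝ} {a : ℝ} (hg : HasSum g a)
    (h : ∀ i, ‖L (f i)‖ ≤ g i) : ‖L (∑' i, f i)‖ ≤ a := by
  by_cases hf : Summable f
  · rw [L.map_tsum hf]
    exact tsum_of_norm_bounded hg h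
  · rw [tsum_eq_zero_of_not_summable hf, map_zero, norm_zero]
    exact hg.nonneg fun i => (norm_nonneg _).trans (h i)

theorem hasSum_pow_mul_pow_succ {α lam : ℝ} (h : |α * lam| < 1) :
    HasSum (fun m : ℕ => lam ^ m * α ^ (m + 1)) (α / (1 - α * lam)) := by
  have hterm : (fun m : ℕ => lam ^ m * α ^ (m + 1)) = fun m => α * (α * lam) ^ m := by
    funext m
    ring
  rw [hterm, div_eq_mul_inv]
  exact (hasSum_geometric_of_abs_lt_one h).mul_left α

namespace Matrix

variable {ι R : Type*} [Fintype ι] [DecidableEq ι]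

theorem vecMul_pow_eq_self [CommSemiring R] {Q : Matrix ι ι R} {v : ι → R} (h : v ᵥ* Q = v)
    (k : ℕ) : v ᵥ* Q ^ k = v := by
  induction k with
  | zero => exact vecMul_one v
  | succ k ih => rw [pow_succ, ← vecMul_vecMul, ih, h]

theorem sq_mulVec_le_mulVec_sq {Q : Matrix ι ι ℝ} (hQ : Q ∈ rowStochastic ℝ ι)
    (J : ι → ℝ) (i : ι) : (Q *ᵥ J) i ^ 2 ≤ (Q *ᵥ J ^ 2) i := by
  simpa [mulVec, dotProduct] using (even_two.convexOn_pow (𝕜 := ℝ)).map_sum_le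
    (t := Finset.univ) (p := J) (fun j _ => hQ.1 i j) (sum_row_of_mem_rowStochastic hQ i)
    (fun j _ => Set.mem_univ (J j))

end Matrix

section WeightedNorm

variable {n : ℕ} {pi : Fin n → ℝ}

noncomputable def weightedEmbedding (pi : Fin n → ℝ) :
    (Fin n → ℝ) →ₗ[ℝ] EuclideanSpace ℝ (Fin n) :=
  (WithLp.linearEquiv 2 ℝ (Fin n → ℝ)).symm.toLinearMap ∘ₗ
    (diagonal fun i => √(pi i)).mulVecLin

theorem norm_weightedEmbedding (hpi : ∀ i, 0 ≤ pi i) (J : Fin n → ℝ) :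
    ‖weightedEmbedding pi J‖ = normD pi J := by
  rw [EuclideanSpace.norm_eq, normD]
  congr 1
  refine Finset.sum_congr rfl fun i _ => ?_
  simp [weightedEmbedding, mulVec_diagonal, mul_pow, Real.sq_sqrt (hpi i)]

theorem normD_mulVec_le {Q : Matrix (Fin n) (Fin n) ℝ} (hQ : Q ∈ rowStochastic ℝ (Fin n))
    (hpi : ∀ i, 0 ≤ pi i) (hstat : pi ᵥ* Q = pi) (J : Fin n → ℝ) :
    normD pi (Q *ᵥ J) ≤ normD pi J := by
  refine Real.sqrt_le_sqrt ?_
  calc ∑ i, pi i * (Q *ᵥ J) i ^ 2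
      ≤ ∑ i, pi i * (Q *ᵥ J ^ 2) i :=
        Finset.sum_le_sum fun i _ =>
          mul_le_mul_of_nonneg_left (sq_mulVec_le_mulVec_sq hQ J i) (hpi i)
    _ = (pi ᵥ* Q) ⬝ᵥ J ^ 2 := dotProduct_mulVec pi Q _
    _ = ∑ i, pi i * J i ^ 2 := by rw [hstat]; rfl

end WeightedNorm

theorem TD_matrix_M_normD_bound_general
    {n : ℕ} (P : Matrix (Fin n) (Fin n) ℝ)
    (hP0 : ∀ i j, 0 ≤ P i j) (hP1 : ∀ i, ∑ j, P i j = 1)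
    (pi : Fin n → ℝ) (hpi0 : ∀ i, 0 < pi i)
    (hstat : ∀ j, ∑ i, pi i * P i j = pi j)
    (α lam : ℝ) (hα0 : 0 < α) (hα1 : α < 1) (hlam0 : 0 ≤ lam) (hlam1 : lam < 1)
    (M : Matrix (Fin n) (Fin n) ℝ)
    (hM : M = (1 - lam) • ∑' m : ℕ, (lam ^ m * α ^ (m + 1)) • P ^ (m + 1))
    (J : Fin n → ℝ) :
    normD pi (M.mulVec J) ≤ (α * (1 - lam) / (1 - α * lam)) * normD pi J := by
  have hP : P ∈ rowStochastic ℝ (Fin n) := mem_rowStochastic_iff_sum.2 ⟨hP0, hP1⟩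
  have hpi : ∀ i, 0 ≤ pi i := fun i => (hpi0 i).le
  have hc : ∀ m : ℕ, 0 ≤ lam ^ m * α ^ (m + 1) := fun m => by positivity
  let L : Matrix (Fin n) (Fin n) ℝ →L[ℝ] EuclideanSpace ℝ (Fin n) :=
    LinearMap.toContinuousLinearMap (weightedEmbedding pi ∘ₗ (mulVecBilin ℝ ℝ).flip J)
  have hL : ∀ A, ‖L A‖ = normD pi (A *ᵥ J) := fun A => norm_weightedEmbedding hpi _
  have hterm : ∀ m : ℕ, ‖L ((lam ^ m * α ^ (m + 1)) • P ^ (m + 1))‖ ≤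
      lam ^ m * α ^ (m + 1) * normD pi J := fun m => by
    rw [map_smul, norm_smul, Real.norm_of_nonneg (hc m), hL]
    exact mul_le_mul_of_nonneg_left
      (normD_mulVec_le (pow_mem hP _) hpi (vecMul_pow_eq_self (funext hstat) _) J) (hc m)
  have hsum := (hasSum_pow_mul_pow_succ (α := α) (lam := lam)
    (by rw [abs_of_nonneg (by positivity)]; nlinarith)).mul_right (normD pi J)
  calc normD pi (M *ᵥ J)
      = (1 - lam) * ‖L (∑' m : ℕ, (lam ^ m * α ^ (m + 1)) • P ^ (m + 1))‖ := by
        rw [← hL, hM, map_smul, norm_smul, Real.norm_of_nonneg (by linarith)]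
    _ ≤ (1 - lam) * (α / (1 - α * lam) * normD pi J) := by
        gcongr
        exact norm_map_tsum_le_of_hasSum L hsum hterm
    _ = α * (1 - lam) / (1 - α * lam) * normD pi J := by ring

/-- if `P` is row-stochastic with stationary distribution `π`, `α ∈ (0,1)`,
`λ ∈ [0,1)` and `M = (1−λ) ∑_{m=0}^∞ λ^m α^{m+1} P^{m+1}`, then
`‖M J‖_D ≤ (α(1−λ)/(1−αλ)) ‖J‖_D` for every `J`. -/
theorem TD_matrix_M_normD_bound
    {n : ℕ} (P : Matrix (Fin n) (Fin n) ℝ)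
    (hP0 : ∀ i j, 0 ≤ P i j) (hP1 : ∀ i, ∑ j, P i j = 1)
    (pi : Fin n → ℝ) (hpi0 : ∀ i, 0 < pi i) (hpi1 : ∑ i, pi i = 1)
    (hstat : ∀ j, ∑ i, pi i * P i j = pi j)
    (α lam : ℝ) (hα0 : 0 < α) (hα1 : α < 1) (hlam0 : 0 ≤ lam) (hlam1 : lam < 1)
    (M : Matrix (Fin n) (Fin n) ℝ)
    (hM : M = (1 - lam) • ∑' m : ℕ, (lam ^ m * α ^ (m + 1)) • P ^ (m + 1))
    (J : Fin n → ℝ) :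
    normD pi (M.mulVec J) ≤ (α * (1 - lam) / (1 - α * lam)) * normD pi J :=
  TD_matrix_M_normD_bound_general P hP0 hP1 pi hpi0 hstat α lam hα0 hα1 hlam0 hlam1 M hM J
end

section
/- (Approximation error bound under manipulated costs.) Let P ∈ ℝ^{n×n} be row-stochastic with stationary distribution π, D = diag(π), α ∈ (0,1), λ ∈ [0,1], and let Φ ∈ ℝ^{n×K} have linearly independent columns. Define M := (1−λ) Σ_{m=0}^∞ λ^m α^{m+1} P^{m+1}, A := Φᵀ D (M − I) Φ, b(c) := Φᵀ D Σ_{m=0}^∞ (αλ)^m P^m c for c ∈ ℝ^n, the projection Π := Φ(Φᵀ D Φ)^{-1} Φᵀ D, and the cost-to-go vector J^μ := (I − α P)^{-1} ḡ for true cost vector ḡ ∈ ℝ^n. If r* and r̃* satisfy A r* + b(ḡ) = 0 and A r̃* + b(g̃) = 0 for a manipulated cost vector g̃ ∈ ℝ^n, then ‖Φ r̃* − J^μ‖_D ≤ ‖Φ r̃* − Φ r*‖_D + ((1−λα)/√((1−α)(1+α−2λα))) · ‖(Π − I) J^μ‖_D. -/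
open Matrix

/-!
The TD(λ) limit `Φ r*` is the fixed point of `Π T`, where `T J = M J + N ḡ` with
`N = (I − αλP)⁻¹`, and `J^μ = T J^μ` because `N (I − αP) = I − M`. Stationarity of `π` and
Jensen's inequality make `P` nonexpansive in `‖·‖_D`, so `M = (1 − λ) N αP` is a contraction
with modulus `β = (1 − λ)α / (1 − λα)`. Since `Π` is the `D`-orthogonal projection,
`Φ r* − J^μ = Π M (Φ r* − J^μ) + (Π − I) J^μ` is an orthogonal decomposition, whence
`‖Φ r* − J^μ‖² ≤ β² ‖Φ r* − J^μ‖² + ‖(Π − I) J^μ‖²`, and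
`1 − β² = (1 − α)(1 + α − 2λα) / (1 − λα)²`. The triangle inequality through `Φ r*` finishes.
-/

section WeightedNorm

variable {n : ℕ} {pi : Fin n → ℝ}

lemma normD_nonneg (x : Fin n → ℝ) : 0 ≤ normD pi x := Real.sqrt_nonneg _

lemma normD_sq (hpi : ∀ i, 0 ≤ pi i) (x : Fin n → ℝ) :
    normD pi x ^ 2 = ∑ i, pi i * x i ^ 2 :=
  Real.sq_sqrt (Finset.sum_nonneg fun i _ => mul_nonneg (hpi i) (sq_nonneg _))

lemma normD_eq_norm_toLp (hpi : ∀ i, 0 ≤ pi i) (x : Fin n → ℝ) :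
    normD pi x = ‖(WithLp.toLp 2 (fun i => √(pi i) * x i) : EuclideanSpace ℝ (Fin n))‖ := by
  rw [EuclideanSpace.norm_eq, normD]
  congr 1
  refine Finset.sum_congr rfl fun i _ => ?_
  rw [Real.norm_eq_abs, sq_abs, mul_pow, Real.sq_sqrt (hpi i)]

lemma normD_smul (hpi : ∀ i, 0 ≤ pi i) (c : ℝ) (x : Fin n → ℝ) :
    normD pi (c • x) = |c| * normD pi x := by
  rw [normD_eq_norm_toLp hpi, normD_eq_norm_toLp hpi, ← Real.norm_eq_abs, ← norm_smul]
  congr 1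
  ext i
  simp only [Pi.smul_apply, smul_eq_mul, PiLp.smul_apply]
  ring

lemma normD_add_le (hpi : ∀ i, 0 ≤ pi i) (x y : Fin n → ℝ) :
    normD pi (x + y) ≤ normD pi x + normD pi y := by
  rw [normD_eq_norm_toLp hpi, normD_eq_norm_toLp hpi, normD_eq_norm_toLp hpi]
  refine le_of_eq_of_le (congrArg norm ?_) (norm_add_le _ _)
  ext i
  simp only [Pi.add_apply, PiLp.add_apply, mul_add]

lemma normD_add_sq_of_dotProduct_eq_zero (hpi : ∀ i, 0 ≤ pi i) {x y : Fin n → ℝ}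
    (h : x ⬝ᵥ (diagonal pi *ᵥ y) = 0) :
    normD pi (x + y) ^ 2 = normD pi x ^ 2 + normD pi y ^ 2 := by
  have hxy : ∑ i, pi i * x i * y i = 0 := by
    rw [← h, dotProduct]
    exact Finset.sum_congr rfl fun i _ => by rw [mulVec_diagonal]; ring
  rw [normD_sq hpi, normD_sq hpi, normD_sq hpi]
  calc ∑ i, pi i * (x + y) i ^ 2
      = ∑ i, pi i * x i ^ 2 + ∑ i, pi i * y i ^ 2 + 2 * ∑ i, pi i * x i * y i := by
        rw [Finset.mul_sum, ← Finset.sum_add_distrib, ← Finset.sum_add_distrib]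
        exact Finset.sum_congr rfl fun i _ => by rw [Pi.add_apply]; ring
    _ = ∑ i, pi i * x i ^ 2 + ∑ i, pi i * y i ^ 2 := by rw [hxy, mul_zero, add_zero]

lemma normD_mulVec_le_of_mem_rowStochastic (hpi : ∀ i, 0 ≤ pi i)
    {P : Matrix (Fin n) (Fin n) ℝ} (hP : P ∈ rowStochastic ℝ (Fin n)) (hstat : pi ᵥ* P = pi)
    (x : Fin n → ℝ) : normD pi (P *ᵥ x) ≤ normD pi x := by
  obtain ⟨hP0, hP1⟩ := mem_rowStochastic_iff_sum.1 hP
  refine Real.sqrt_le_sqrt ?_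
  have jensen : ∀ i, (P *ᵥ x) i ^ 2 ≤ ∑ j, P i j * x j ^ 2 := fun i => by
    have := Finset.sum_sq_le_sum_mul_sum_of_sq_le_mul Finset.univ (r := fun j => P i j * x j)
      (fun j _ => hP0 i j) (fun j _ => mul_nonneg (hP0 i j) (sq_nonneg (x j)))
      (fun j _ => le_of_eq (by ring))
    rwa [hP1 i, one_mul] at this
  calc ∑ i, pi i * (P *ᵥ x) i ^ 2
      ≤ ∑ i, pi i * ∑ j, P i j * x j ^ 2 :=
        Finset.sum_le_sum fun i _ => mul_le_mul_of_nonneg_left (jensen i) (hpi i)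
    _ = ∑ j, (pi ᵥ* P) j * x j ^ 2 := by
        simp only [vecMul, dotProduct, Finset.mul_sum, Finset.sum_mul]
        rw [Finset.sum_comm]
        exact Finset.sum_congr rfl fun j _ => Finset.sum_congr rfl fun i _ => by ring
    _ = ∑ j, pi j * x j ^ 2 := by rw [hstat]

lemma one_sub_mul_normD_le_of_eq_add_smul_mulVec (hpi : ∀ i, 0 ≤ pi i)
    {P : Matrix (Fin n) (Fin n) ℝ} (hP : ∀ x, normD pi (P *ᵥ x) ≤ normD pi x)
    {c : ℝ} (hc : 0 ≤ c) {x y : Fin n → ℝ} (h : y = x + c • P *ᵥ y) :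
    (1 - c) * normD pi y ≤ normD pi x := by
  have := normD_add_le hpi x (c • P *ᵥ y)
  rw [← h, normD_smul hpi, abs_of_nonneg hc] at this
  nlinarith [hP y]

end WeightedNorm

section GeometricSeries

attribute [local instance] Matrix.linftyOpNormedAddCommGroup Matrix.linftyOpNormedRing
  Matrix.linftyOpNormedAlgebra

variable {n : ℕ} {P : Matrix (Fin n) (Fin n) ℝ}

lemma norm_smul_lt_one_of_mem_rowStochastic (hP : P ∈ rowStochastic ℝ (Fin n)) {c : ℝ}
    (hc : |c| < 1) : ‖c • P‖ < 1 := by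
  obtain ⟨hP0, hP1⟩ := mem_rowStochastic_iff_sum.1 hP
  have hP_le : ‖P‖ ≤ 1 := by
    rw [linfty_opNorm_def, ← NNReal.coe_one, NNReal.coe_le_coe]
    refine Finset.sup_le fun i _ => ?_
    rw [← NNReal.coe_le_coe, NNReal.coe_sum, NNReal.coe_one, ← hP1 i]
    exact (Finset.sum_congr rfl fun j _ => by simp [abs_of_nonneg (hP0 i j)]).le
  rw [norm_smul, Real.norm_eq_abs]
  nlinarith [abs_nonneg c, norm_nonneg P]

lemma summable_smul_pow_of_mem_rowStochastic (hP : P ∈ rowStochastic ℝ (Fin n)) {c : ℝ}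
    (hc : |c| < 1) : Summable fun m : ℕ => (c • P) ^ m :=
  haveI : CompleteSpace (Matrix (Fin n) (Fin n) ℝ) := FiniteDimensional.complete ℝ _
  summable_geometric_of_norm_lt_one (norm_smul_lt_one_of_mem_rowStochastic hP hc)

lemma one_sub_smul_mul_tsum_smul_pow (hP : P ∈ rowStochastic ℝ (Fin n)) {c : ℝ}
    (hc : |c| < 1) : (1 - c • P) * ∑' m : ℕ, (c • P) ^ m = 1 :=
  (summable_smul_pow_of_mem_rowStochastic hP hc).one_sub_mul_tsum_pow

end GeometricSeries

section TDOperator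

variable {n : ℕ} {P : Matrix (Fin n) (Fin n) ℝ} {α lam : ℝ}

lemma tsum_smul_pow_succ_eq (hP : P ∈ rowStochastic ℝ (Fin n)) (hc : |α * lam| < 1) :
    ∑' m : ℕ, (lam ^ m * α ^ (m + 1)) • P ^ (m + 1) =
      (∑' m : ℕ, ((α * lam) • P) ^ m) * (α • P) := by
  rw [← (summable_smul_pow_of_mem_rowStochastic hP hc).tsum_mul_right]
  refine tsum_congr fun m => ?_
  rw [smul_pow, smul_mul_smul, ← pow_succ]
  congr 1
  ring

lemma tsum_smul_pow_mul_one_sub_smul (hP : P ∈ rowStochastic ℝ (Fin n)) (hc : |α * lam| < 1) :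
    (∑' m : ℕ, ((α * lam) • P) ^ m) * (1 - α • P) =
      1 - (1 - lam) • ∑' m : ℕ, (lam ^ m * α ^ (m + 1)) • P ^ (m + 1) := by
  set N := ∑' m : ℕ, ((α * lam) • P) ^ m
  have hN : N * (1 - (α * lam) • P) = 1 := mul_eq_one_comm.1 (one_sub_smul_mul_tsum_smul_pow hP hc)
  rw [mul_sub, mul_one, mul_smul_comm] at hN
  rw [tsum_smul_pow_succ_eq hP hc, mul_sub, mul_one, mul_smul_comm, ← hN]
  module

lemma normD_tsum_smul_pow_succ_mulVec_le {pi : Fin n → ℝ} (hpi : ∀ i, 0 ≤ pi i)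
    (hP : P ∈ rowStochastic ℝ (Fin n)) (hstat : pi ᵥ* P = pi) (hα0 : 0 ≤ α) (hlam0 : 0 ≤ lam)
    (hlam1 : lam ≤ 1) (hαlam : α * lam < 1) (x : Fin n → ℝ) :
    (1 - lam * α) *
        normD pi (((1 - lam) • ∑' m : ℕ, (lam ^ m * α ^ (m + 1)) • P ^ (m + 1)) *ᵥ x) ≤
      (1 - lam) * α * normD pi x := by
  have hc : |α * lam| < 1 := by rwa [abs_of_nonneg (mul_nonneg hα0 hlam0)]
  have hP_le := normD_mulVec_le_of_mem_rowStochastic hpi hP hstat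
  set N := ∑' m : ℕ, ((α * lam) • P) ^ m
  have hN : ∀ z, (1 - α * lam) * normD pi (N *ᵥ z) ≤ normD pi z := by
    have hNQ : N = 1 + (α * lam) • P * N := by
      rw [← one_sub_smul_mul_tsum_smul_pow hP hc, sub_mul, one_mul, sub_add_cancel]
    refine fun z => one_sub_mul_normD_le_of_eq_add_smul_mulVec hpi hP_le
      (mul_nonneg hα0 hlam0) ?_
    conv_lhs => rw [hNQ]
    rw [add_mulVec, one_mulVec, ← mulVec_mulVec, smul_mulVec]
  rw [tsum_smul_pow_succ_eq hP hc, smul_mulVec, ← mulVec_mulVec, normD_smul hpi,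
    abs_of_nonneg (sub_nonneg.2 hlam1)]
  calc (1 - lam * α) * ((1 - lam) * normD pi (N *ᵥ ((α • P) *ᵥ x)))
      = (1 - lam) * ((1 - α * lam) * normD pi (N *ᵥ ((α • P) *ᵥ x))) := by ring
    _ ≤ (1 - lam) * normD pi ((α • P) *ᵥ x) :=
        mul_le_mul_of_nonneg_left (hN _) (sub_nonneg.2 hlam1)
    _ ≤ (1 - lam) * (α * normD pi x) := by
        rw [smul_mulVec, normD_smul hpi, abs_of_nonneg hα0]
        gcongr
        exact hP_le x
    _ = (1 - lam) * α * normD pi x := by ring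

lemma one_sub_smul_mulVec_inv_mulVec (hP : P ∈ rowStochastic ℝ (Fin n)) (hα : |α| < 1)
    (g : Fin n → ℝ) : (1 - α • P) *ᵥ ((1 - α • P)⁻¹ *ᵥ g) = g := by
  rw [mulVec_mulVec, inv_eq_right_inv (one_sub_smul_mul_tsum_smul_pow hP hα),
    one_sub_smul_mul_tsum_smul_pow hP hα, one_mulVec]

lemma td_limit_projected_bellman {K : ℕ} (hP : P ∈ rowStochastic ℝ (Fin n)) (hα : |α| < 1)
    (hc : |α * lam| < 1) {M : Matrix (Fin n) (Fin n) ℝ}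
    (hM : M = (1 - lam) • ∑' m : ℕ, (lam ^ m * α ^ (m + 1)) • P ^ (m + 1))
    (Φ : Matrix (Fin n) (Fin K) ℝ) (D : Matrix (Fin n) (Fin n) ℝ) {g : Fin n → ℝ}
    {r : Fin K → ℝ}
    (h : (Φᵀ * D * (M - 1) * Φ) *ᵥ r + (Φᵀ * D * ∑' m : ℕ, (α * lam) ^ m • P ^ m) *ᵥ g = 0) :
    (Φᵀ * D) *ᵥ ((M - 1) *ᵥ (Φ *ᵥ r - (1 - α • P)⁻¹ *ᵥ g)) = 0 := by
  set J := (1 - α • P)⁻¹ *ᵥ g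
  have hNg : (∑' m : ℕ, (α * lam) ^ m • P ^ m) *ᵥ g = (1 - M) *ᵥ J := by
    calc (∑' m : ℕ, (α * lam) ^ m • P ^ m) *ᵥ g
        = (∑' m : ℕ, ((α * lam) • P) ^ m) *ᵥ ((1 - α • P) *ᵥ J) := by
          simp_rw [smul_pow]
          rw [one_sub_smul_mulVec_inv_mulVec hP hα]
      _ = (1 - M) *ᵥ J := by rw [mulVec_mulVec, tsum_smul_pow_mul_one_sub_smul hP hc, hM]
  calc (Φᵀ * D) *ᵥ ((M - 1) *ᵥ (Φ *ᵥ r - J))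
      = (Φᵀ * D) *ᵥ ((M - 1) *ᵥ (Φ *ᵥ r) + (∑' m : ℕ, (α * lam) ^ m • P ^ m) *ᵥ g) := by
        rw [hNg, mulVec_sub, ← neg_sub M 1, neg_mulVec, sub_eq_add_neg]
    _ = (Φᵀ * D * (M - 1) * Φ) *ᵥ r + (Φᵀ * D * ∑' m : ℕ, (α * lam) ^ m • P ^ m) *ᵥ g := by
        simp only [mulVec_add, mulVec_mulVec, Matrix.mul_assoc]
    _ = 0 := h

end TDOperator

noncomputable def weightedProjection {n K : ℕ} (pi : Fin n → ℝ) (Φ : Matrix (Fin n) (Fin K) ℝ) :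
    Matrix (Fin n) (Fin n) ℝ :=
  Φ * (Φᵀ * diagonal pi * Φ)⁻¹ * Φᵀ * diagonal pi

section WeightedProjection

variable {n K : ℕ} {pi : Fin n → ℝ} {Φ : Matrix (Fin n) (Fin K) ℝ}

lemma isUnit_det_transpose_mul_diagonal_mul (hpi : ∀ i, 0 < pi i)
    (hΦ : LinearIndependent ℝ Φ.col) : IsUnit (Φᵀ * diagonal pi * Φ).det := by
  have := (posDef_diagonal_iff.2 hpi).conjTranspose_mul_mul_same (mulVec_injective_iff.2 hΦ)
  rw [conjTranspose_eq_transpose_of_trivial] at this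
  exact (isUnit_iff_isUnit_det _).1 this.isUnit

lemma weightedProjection_mulVec (x : Fin n → ℝ) :
    weightedProjection pi Φ *ᵥ x =
      Φ *ᵥ ((Φᵀ * diagonal pi * Φ)⁻¹ *ᵥ ((Φᵀ * diagonal pi) *ᵥ x)) := by
  simp only [weightedProjection, mulVec_mulVec, Matrix.mul_assoc]

lemma weightedProjection_mul_self (hG : IsUnit (Φᵀ * diagonal pi * Φ).det) :
    weightedProjection pi Φ * Φ = Φ :=
  calc weightedProjection pi Φ * Φ = Φ * ((Φᵀ * diagonal pi * Φ)⁻¹ * (Φᵀ * diagonal pi * Φ)) := by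
        simp only [weightedProjection, Matrix.mul_assoc]
    _ = Φ := by rw [nonsing_inv_mul _ hG, Matrix.mul_one]

lemma transpose_mul_diagonal_mul_weightedProjection (hG : IsUnit (Φᵀ * diagonal pi * Φ).det) :
    Φᵀ * diagonal pi * weightedProjection pi Φ = Φᵀ * diagonal pi :=
  calc Φᵀ * diagonal pi * weightedProjection pi Φ
      = (Φᵀ * diagonal pi * Φ) * (Φᵀ * diagonal pi * Φ)⁻¹ * (Φᵀ * diagonal pi) := by
        simp only [weightedProjection, Matrix.mul_assoc]
    _ = Φᵀ * diagonal pi := by rw [mul_nonsing_inv _ hG, Matrix.one_mul]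

lemma weightedProjection_mulVec_dotProduct_eq_zero (hG : IsUnit (Φᵀ * diagonal pi * Φ).det)
    (a c : Fin n → ℝ) :
    (weightedProjection pi Φ *ᵥ a) ⬝ᵥ (diagonal pi *ᵥ ((weightedProjection pi Φ - 1) *ᵥ c)) =
      0 := by
  have h : Φᵀ *ᵥ (diagonal pi *ᵥ ((weightedProjection pi Φ - 1) *ᵥ c)) = 0 := by
    rw [mulVec_mulVec, mulVec_mulVec, Matrix.mul_sub, Matrix.mul_one,
      transpose_mul_diagonal_mul_weightedProjection hG, sub_self, zero_mulVec]
  rw [weightedProjection_mulVec, ← vecMul_transpose, ← dotProduct_mulVec, h, dotProduct_zero]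

lemma normD_weightedProjection_mulVec_le (hpi : ∀ i, 0 ≤ pi i)
    (hG : IsUnit (Φᵀ * diagonal pi * Φ).det) (z : Fin n → ℝ) :
    normD pi (weightedProjection pi Φ *ᵥ z) ≤ normD pi z := by
  have h := normD_add_sq_of_dotProduct_eq_zero hpi
    (weightedProjection_mulVec_dotProduct_eq_zero hG z (-z))
  rw [mulVec_neg, sub_mulVec, one_mulVec, neg_sub, add_sub_cancel] at h
  refine (pow_le_pow_iff_left₀ (normD_nonneg _) (normD_nonneg _) two_ne_zero).1 ?_
  rw [h]
  exact le_add_of_nonneg_right (sq_nonneg _)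

end WeightedProjection

lemma le_div_sqrt_sq_sub_sq_mul {a b d e : ℝ} (ha : 0 ≤ a) (hd : 0 ≤ d) (hab : b ^ 2 < a ^ 2)
    (h : a ^ 2 * e ^ 2 ≤ b ^ 2 * e ^ 2 + a ^ 2 * d ^ 2) : e ≤ a / √(a ^ 2 - b ^ 2) * d := by
  have hpos : 0 < a ^ 2 - b ^ 2 := sub_pos.2 hab
  refine (abs_le_of_sq_le_sq' ?_ (by positivity)).2
  rw [mul_pow, div_pow, Real.sq_sqrt hpos.le, div_mul_eq_mul_div, le_div_iff₀ hpos]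
  linarith

lemma normD_sub_le_of_projected_fixed_point {n K : ℕ} {pi : Fin n → ℝ}
    {Φ : Matrix (Fin n) (Fin K) ℝ} (hpi : ∀ i, 0 ≤ pi i) (hG : IsUnit (Φᵀ * diagonal pi * Φ).det)
    {M : Matrix (Fin n) (Fin n) ℝ} {a b : ℝ} (ha : 0 ≤ a) (hb : 0 ≤ b) (hba : b < a)
    (hM : ∀ x, a * normD pi (M *ᵥ x) ≤ b * normD pi x) {r : Fin K → ℝ} {J : Fin n → ℝ}
    (hfix : (Φᵀ * diagonal pi) *ᵥ ((M - 1) *ᵥ (Φ *ᵥ r - J)) = 0) :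
    normD pi (Φ *ᵥ r - J) ≤
      a / √(a ^ 2 - b ^ 2) * normD pi ((weightedProjection pi Φ - 1) *ᵥ J) := by
  set Pr := weightedProjection pi Φ
  set u := Φ *ᵥ r - J
  have hPMu : Pr *ᵥ (M *ᵥ u) = Pr *ᵥ u := by
    rw [sub_mulVec, one_mulVec, mulVec_sub, sub_eq_zero] at hfix
    rw [weightedProjection_mulVec, weightedProjection_mulVec, hfix]
  have hdecomp : Pr *ᵥ (M *ᵥ u) + (Pr - 1) *ᵥ J = u := by
    rw [hPMu, sub_mulVec, one_mulVec, mulVec_sub, mulVec_mulVec, weightedProjection_mul_self hG]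
    exact sub_add_sub_cancel _ _ _
  have hpyth := normD_add_sq_of_dotProduct_eq_zero hpi
    (weightedProjection_mulVec_dotProduct_eq_zero hG (M *ᵥ u) J)
  rw [hdecomp] at hpyth
  have hcontr : a * normD pi (Pr *ᵥ (M *ᵥ u)) ≤ b * normD pi u :=
    (mul_le_mul_of_nonneg_left (normD_weightedProjection_mulVec_le hpi hG _) ha).trans (hM u)
  have hcontr_sq := pow_le_pow_left₀ (mul_nonneg ha (normD_nonneg _)) hcontr 2
  refine le_div_sqrt_sq_sub_sq_mul ha (normD_nonneg _) (by nlinarith) ?_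
  rw [mul_pow, mul_pow] at hcontr_sq
  linear_combination a ^ 2 * hpyth + hcontr_sq

theorem TD_approximation_error_bound_general
    {n K : ℕ} (P : Matrix (Fin n) (Fin n) ℝ)
    (hP0 : ∀ i j, 0 ≤ P i j) (hP1 : ∀ i, ∑ j, P i j = 1)
    (pi : Fin n → ℝ) (hpi0 : ∀ i, 0 < pi i)
    (hstat : ∀ j, ∑ i, pi i * P i j = pi j)
    (α lam : ℝ) (hα0 : 0 < α) (hα1 : α < 1) (hlam0 : 0 ≤ lam) (hlam1 : lam ≤ 1)
    (Φ : Matrix (Fin n) (Fin K) ℝ)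
    (hΦ : LinearIndependent ℝ (fun k : Fin K => fun i : Fin n => Φ i k))
    (D : Matrix (Fin n) (Fin n) ℝ) (hD : D = Matrix.diagonal pi)
    (M : Matrix (Fin n) (Fin n) ℝ)
    (hM : M = (1 - lam) • ∑' m : ℕ, (lam ^ m * α ^ (m + 1)) • P ^ (m + 1))
    (A : Matrix (Fin K) (Fin K) ℝ) (hA : A = Φᵀ * D * (M - 1) * Φ)
    (b : (Fin n → ℝ) → (Fin K → ℝ))
    (hb : ∀ c, b c = (Φᵀ * D * ∑' m : ℕ, (α * lam) ^ m • P ^ m).mulVec c)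
    (Pr : Matrix (Fin n) (Fin n) ℝ) (hPr : Pr = Φ * (Φᵀ * D * Φ)⁻¹ * Φᵀ * D)
    (gbar : Fin n → ℝ)
    (Jμ : Fin n → ℝ) (hJμ : Jμ = ((1 - α • P)⁻¹).mulVec gbar)
    (rstar rtstar : Fin K → ℝ)
    (hrstar : A.mulVec rstar + b gbar = 0) :
    normD pi (Φ.mulVec rtstar - Jμ) ≤
      normD pi (Φ.mulVec rtstar - Φ.mulVec rstar) +
        ((1 - lam * α) / Real.sqrt ((1 - α) * (1 + α - 2 * lam * α))) *
          normD pi ((Pr - 1).mulVec Jμ) := by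
  subst hD hA hPr hJμ
  have hpi : ∀ i, 0 ≤ pi i := fun i => (hpi0 i).le
  have hP : P ∈ rowStochastic ℝ (Fin n) := mem_rowStochastic_iff_sum.2 ⟨hP0, hP1⟩
  have hαlam : α * lam < 1 := by nlinarith
  have hfix := td_limit_projected_bellman hP (by rwa [abs_of_pos hα0])
    (by rwa [abs_of_nonneg (by positivity)]) hM Φ (diagonal pi) (by rwa [hb] at hrstar)
  have hM_contr (x : Fin n → ℝ) : (1 - lam * α) * normD pi (M *ᵥ x) ≤ (1 - lam) * α * normD pi x :=
    hM ▸ normD_tsum_smul_pow_succ_mulVec_le hpi hP (funext hstat) hα0.le hlam0 hlam1 hαlam x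
  have hbound := normD_sub_le_of_projected_fixed_point hpi
    (isUnit_det_transpose_mul_diagonal_mul hpi0 hΦ) (by nlinarith) (by nlinarith) (by nlinarith)
    hM_contr hfix
  rw [show (1 - α) * (1 + α - 2 * lam * α) = (1 - lam * α) ^ 2 - ((1 - lam) * α) ^ 2 by ring]
  calc normD pi (Φ *ᵥ rtstar - (1 - α • P)⁻¹ *ᵥ gbar)
      = normD pi ((Φ *ᵥ rtstar - Φ *ᵥ rstar) + (Φ *ᵥ rstar - (1 - α • P)⁻¹ *ᵥ gbar)) := by
        rw [sub_add_sub_cancel]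
    _ ≤ _ := normD_add_le hpi _ _
    _ ≤ _ := add_le_add_right hbound _

/-- Approximation error bound under manipulated costs: with
`M = (1−λ)∑ λ^m α^{m+1} P^{m+1}`, `A = Φᵀ D (M − I) Φ`, `b(c) = Φᵀ D ∑ (αλ)^m P^m c`,
`Π = Φ(Φᵀ D Φ)⁻¹ Φᵀ D` and `J^μ = (I − αP)⁻¹ ḡ`, if `A r* + b(ḡ) = 0` and
`A r̃* + b(g̃) = 0` then
`‖Φ r̃* − J^μ‖_D ≤ ‖Φ r̃* − Φ r*‖_D + ((1−λα)/√((1−α)(1+α−2λα))) ‖(Π − I) J^μ‖_D`. -/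
theorem TD_approximation_error_bound
    {n K : ℕ} (P : Matrix (Fin n) (Fin n) ℝ)
    (hP0 : ∀ i j, 0 ≤ P i j) (hP1 : ∀ i, ∑ j, P i j = 1)
    (pi : Fin n → ℝ) (hpi0 : ∀ i, 0 < pi i) (hpi1 : ∑ i, pi i = 1)
    (hstat : ∀ j, ∑ i, pi i * P i j = pi j)
    (α lam : ℝ) (hα0 : 0 < α) (hα1 : α < 1) (hlam0 : 0 ≤ lam) (hlam1 : lam ≤ 1)
    (Φ : Matrix (Fin n) (Fin K) ℝ)
    (hΦ : LinearIndependent ℝ (fun k : Fin K => fun i : Fin n => Φ i k))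
    (D : Matrix (Fin n) (Fin n) ℝ) (hD : D = Matrix.diagonal pi)
    (M : Matrix (Fin n) (Fin n) ℝ)
    (hM : M = (1 - lam) • ∑' m : ℕ, (lam ^ m * α ^ (m + 1)) • P ^ (m + 1))
    (A : Matrix (Fin K) (Fin K) ℝ) (hA : A = Φᵀ * D * (M - 1) * Φ)
    (b : (Fin n → ℝ) → (Fin K → ℝ))
    (hb : ∀ c, b c = (Φᵀ * D * ∑' m : ℕ, (α * lam) ^ m • P ^ m).mulVec c)
    (Pr : Matrix (Fin n) (Fin n) ℝ) (hPr : Pr = Φ * (Φᵀ * D * Φ)⁻¹ * Φᵀ * D)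
    (gbar gt : Fin n → ℝ)
    (Jμ : Fin n → ℝ) (hJμ : Jμ = ((1 - α • P)⁻¹).mulVec gbar)
    (rstar rtstar : Fin K → ℝ)
    (hrstar : A.mulVec rstar + b gbar = 0)
    (hrtstar : A.mulVec rtstar + b gt = 0) :
    normD pi (Φ.mulVec rtstar - Jμ) ≤
      normD pi (Φ.mulVec rtstar - Φ.mulVec rstar) +
        ((1 - lam * α) / Real.sqrt ((1 - α) * (1 + α - 2 * lam * α))) *
          normD pi ((Pr - 1).mulVec Jμ) :=
  TD_approximation_error_bound_general P hP0 hP1 pi hpi0 hstat α lam hα0 hα1 hlam0 hlam1 Φ hΦ D hD M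
    hM A hA b hb Pr hPr gbar Jμ hJμ rstar rtstar hrstar
end
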